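/- arXiv:2602.10212 — 2 statements merged into one kernel-verified Lean document; each statement's English description precedes it below -/
import Mathlib

section
/- For s₀ > 0, the planar ODE y' = (s₀ − yx)x, x' = (s₀ − yx)y with initial condition y(0) = 0, x(0) = x₀ ≠ 0 satisfies lim_{t→∞} y(t)x(t) = s₀. -/
open Filter Topology

/-- For `s₀ > 0`, solutions of the planar ODE `y' = (s₀ − yx)x`, `x' = (s₀ − yx)y`
with `y(0) = 0`, `x(0) = x₀ ≠ 0` satisfy `y(t)x(t) → s₀` as `t → ∞`. -/
theorem scalar_lora_flow_converges (s₀ x₀ : ℝ) (hs₀ : 0 < s₀) (hx₀ : x₀ ≠ 0)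
    (y x : ℝ → ℝ)
    (hy : ∀ t : ℝ, 0 ≤ t → HasDerivWithinAt y ((s₀ - y t * x t) * x t) (Set.Ici 0) t)
    (hx : ∀ t : ℝ, 0 ≤ t → HasDerivWithinAt x ((s₀ - y t * x t) * y t) (Set.Ici 0) t)
    (hy0 : y 0 = 0) (hx0 : x 0 = x₀) :
    Tendsto (fun t => y t * x t) atTop (nhds s₀) := by
  have hxd : ∀ t, 0 < t → HasDerivAt x ((s₀ - y t * x t) * y t) t :=
    fun t ht => (hx t ht.le).hasDerivAt (Ici_mem_nhds ht)
  have hyd : ∀ t, 0 < t → HasDerivAt y ((s₀ - y t * x t) * x t) t :=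
    fun t ht => (hy t ht.le).hasDerivAt (Ici_mem_nhds ht)
  have hxc : ContinuousOn x (Set.Ici 0) := fun t ht => (hx t ht).continuousWithinAt
  have hyc : ContinuousOn y (Set.Ici 0) := fun t ht => (hy t ht).continuousWithinAt
  have hint : interior (Set.Ici (0:ℝ)) = Set.Ioi 0 := interior_Ici
  -- conserved quantity x² − y² = x₀²
  set g : ℝ → ℝ := fun t => x t ^ 2 - y t ^ 2 with hg
  have hgc : ContinuousOn g (Set.Ici 0) := (hxc.pow 2).sub (hyc.pow 2)
  have hgd : ∀ t ∈ interior (Set.Ici (0:ℝ)),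
      HasDerivWithinAt g ((fun _ => (0:ℝ)) t) (interior (Set.Ici 0)) t := by
    intro t ht
    rw [hint] at ht
    have h := ((hxd t ht).pow 2).sub ((hyd t ht).pow 2)
    exact (h.congr_deriv (by ring)).hasDerivWithinAt
  have hmono := monotoneOn_of_hasDerivWithinAt_nonneg (convex_Ici 0) hgc hgd
    (fun _ _ => le_refl 0)
  have hanti := antitoneOn_of_hasDerivWithinAt_nonpos (convex_Ici 0) hgc hgd
    (fun _ _ => le_refl 0)
  have hconst : ∀ t, 0 ≤ t → x t ^ 2 - y t ^ 2 = x₀ ^ 2 := by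
    intro t ht
    have h1 := hmono (Set.mem_Ici.mpr le_rfl) (ht : t ∈ Set.Ici (0:ℝ)) ht
    have h2 := hanti (Set.mem_Ici.mpr le_rfl) (ht : t ∈ Set.Ici (0:ℝ)) ht
    simp only [hg, hx0, hy0] at h1 h2
    have h00 : (0:ℝ) ^ 2 = 0 := by norm_num
    linarith
  have hqlb : ∀ t, 0 ≤ t → x₀ ^ 2 ≤ x t ^ 2 + y t ^ 2 := by
    intro t ht
    have h := hconst t ht
    nlinarith [sq_nonneg (y t)]
  have hx0pos : 0 < x₀ ^ 2 := by positivity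
  set v : ℝ → ℝ := fun t => ((s₀ - y t * x t) * Real.exp (x₀ ^ 2 * t)) *
    ((s₀ - y t * x t) * Real.exp (x₀ ^ 2 * t)) with hv
  have hvc : ContinuousOn v (Set.Ici 0) := by
    have hE : Continuous (fun t : ℝ => Real.exp (x₀ ^ 2 * t)) := by fun_prop
    have hu : ContinuousOn (fun t => (s₀ - y t * x t) * Real.exp (x₀ ^ 2 * t)) (Set.Ici 0) :=
      (continuousOn_const.sub (hyc.mul hxc)).mul hE.continuousOn
    exact hu.mul hu
  have hvd : ∀ t ∈ interior (Set.Ici (0:ℝ)), HasDerivWithinAt v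
      ((fun t => 2 * ((s₀ - y t * x t) * Real.exp (x₀ ^ 2 * t)) ^ 2 *
        (x₀ ^ 2 - (x t ^ 2 + y t ^ 2))) t) (interior (Set.Ici 0)) t := by
    intro t ht
    rw [hint] at ht
    have hu : HasDerivAt (fun t => s₀ - y t * x t)
        (0 - ((s₀ - y t * x t) * x t * x t + y t * ((s₀ - y t * x t) * y t))) t :=
      (hasDerivAt_const t s₀).sub ((hyd t ht).mul (hxd t ht))
    have hE : HasDerivAt (fun t => Real.exp (x₀ ^ 2 * t))
        (Real.exp (x₀ ^ 2 * t) * (x₀ ^ 2 * 1)) t :=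
      ((hasDerivAt_id t).const_mul (x₀ ^ 2)).exp
    have hw := hu.mul hE
    exact ((hw.mul hw).congr_deriv (by simp only [Pi.mul_apply]; ring)).hasDerivWithinAt
  have hanti2 := antitoneOn_of_hasDerivWithinAt_nonpos (convex_Ici 0) hvc hvd (by
    intro t ht
    rw [hint] at ht
    have := hqlb t (le_of_lt ht)
    beta_reduce
    exact mul_nonpos_of_nonneg_of_nonpos (by positivity) (by linarith))
  have hbound : ∀ t, 0 ≤ t → |s₀ - y t * x t| ≤ s₀ * Real.exp (-(x₀ ^ 2 * t)) := by
    intro t ht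
    have h := hanti2 (Set.mem_Ici.mpr le_rfl) (ht : t ∈ Set.Ici (0:ℝ)) ht
    simp only [hv, hy0, zero_mul, sub_zero, mul_zero, Real.exp_zero, mul_one] at h
    have hE : 0 < Real.exp (x₀ ^ 2 * t) := Real.exp_pos _
    have h2 : |(s₀ - y t * x t) * Real.exp (x₀ ^ 2 * t)| ≤ s₀ :=
      abs_le_of_sq_le_sq (by nlinarith [h]) hs₀.le
    rw [abs_mul, abs_of_pos hE] at h2
    rw [Real.exp_neg, ← div_eq_mul_inv, le_div_iff₀ hE]
    exact h2
  have hexp : Tendsto (fun t => s₀ * Real.exp (-(x₀ ^ 2 * t))) atTop (nhds 0) := by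
    have h1 : Tendsto (fun t : ℝ => -(x₀ ^ 2 * t)) atTop atBot :=
      tendsto_neg_atTop_atBot.comp (Tendsto.const_mul_atTop hx0pos tendsto_id)
    have h2 := (Real.tendsto_exp_atBot.comp h1).const_mul s₀
    simpa using h2
  have hu0 : Tendsto (fun t => s₀ - y t * x t) atTop (nhds 0) := by
    apply squeeze_zero_norm' _ hexp
    filter_upwards [eventually_ge_atTop (0:ℝ)] with t ht
    rw [Real.norm_eq_abs]
    exact hbound t ht
  have := (tendsto_const_nhds : Tendsto (fun _ : ℝ => s₀) atTop (nhds s₀)).sub hu0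
  simpa using this
end

section
/- For the system Ỹ' = (Σ₀ − ỸX̃)X̃ᵀ, X̃' = Ỹᵀ(Σ₀ − ỸX̃) with Σ₀ diagonal, if Ỹ(0) has nonzero entries only in positions (i,i) for i ≤ r and X̃(0) has nonzero entries only in positions (i,i) for i ≤ r, then Ỹ(t) and X̃(t) retain this 'diagonal' sparsity pattern for all t ≥ 0, so the dynamics decouple into r independent scalar systems. -/
open Matrix

attribute [local instance] Matrix.normedAddCommGroup Matrix.normedSpace

/-!
Let `P` project a pair `(Y, X)` onto its off-diagonal entries and let `F` be the vector field.
Since `F` maps diagonal pairs to diagonal pairs and `u - P u` is diagonal,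
`P (F u) = P (F u - F (u - P u))`. On `[0, T]` the trajectory `u` and `u - P u` stay in a
compact set on which the polynomial field `F` is Lipschitz, so `‖(P u)'‖ ≤ C ‖P u‖`, and
Grönwall's inequality keeps `P u` at its initial value `0`.
-/

theorem ContinuousLinearMap.apply_eq_zero_of_hasDerivWithinAt_of_mapsTo_ker
    {E : Type*} [NormedAddCommGroup E] [NormedSpace ℝ E]
    {P : E →L[ℝ] E} (hP : IsIdempotentElem P) {F : E → E} (hF : LocallyLipschitz F)
    (hPF : ∀ v, P v = 0 → P (F v) = 0) {u : ℝ → E} {a b : ℝ}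
    (hu : ContinuousOn u (Set.Icc a b))
    (hu' : ∀ t ∈ Set.Ico a b, HasDerivWithinAt u (F (u t)) (Set.Ici t) t) (ha : P (u a) = 0) :
    ∀ t ∈ Set.Icc a b, P (u t) = 0 := by
  have hker : ∀ v, P (v - P v) = 0 := fun v => by
    rw [map_sub, show P (P v) = P v from DFunLike.congr_fun hP.eq v, sub_self]
  obtain ⟨K, hK⟩ := LocallyLipschitzOn.exists_lipschitzOnWith_of_compact
    ((isCompact_Icc.image_of_continuousOn hu).union
      (isCompact_Icc.image_of_continuousOn (hu.sub (P.continuous.comp_continuousOn hu))))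
    hF.locallyLipschitzOn
  refine eq_zero_of_abs_deriv_le_mul_abs_self_of_eq_zero_right (K := ‖P‖ * K)
    (P.continuous.comp_continuousOn hu) (fun t ht => P.hasFDerivAt.comp_hasDerivWithinAt t
    (hu' t ht)) ha fun t ht => ?_
  have ht := Set.Ico_subset_Icc_self ht
  calc ‖P (F (u t))‖ = ‖P (F (u t) - F (u t - P (u t)))‖ := by
        rw [map_sub, hPF _ (hker _), sub_zero]
    _ ≤ ‖P‖ * (K * ‖u t - (u t - P (u t))‖) := by
        refine P.le_opNorm_of_le ?_
        rw [← dist_eq_norm, ← dist_eq_norm]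
        exact hK.dist_le_mul _ (Or.inl ⟨t, ht, rfl⟩) _ (Or.inr ⟨t, ht, rfl⟩)
    _ = ‖P‖ * K * ‖(P ∘ u) t‖ := by
        rw [sub_sub_cancel, mul_assoc]; rfl

namespace Matrix

variable {p q s : ℕ} {R : Type*}

def IsRectDiagonal [Zero R] (A : Matrix (Fin p) (Fin q) R) : Prop :=
  ∀ (i : Fin p) (j : Fin q), (i : ℕ) ≠ (j : ℕ) → A i j = 0

theorem IsRectDiagonal.mul [NonUnitalNonAssocSemiring R] {A : Matrix (Fin p) (Fin q) R}
    {B : Matrix (Fin q) (Fin s) R} (hA : A.IsRectDiagonal) (hB : B.IsRectDiagonal) :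
    (A * B).IsRectDiagonal := by
  intro i j hij
  rw [mul_apply]
  refine Finset.sum_eq_zero fun k _ => ?_
  by_cases hik : (i : ℕ) = k
  · rw [hB k j (hik ▸ hij), mul_zero]
  · rw [hA i k hik, zero_mul]

theorem IsRectDiagonal.transpose [Zero R] {A : Matrix (Fin p) (Fin q) R}
    (hA : A.IsRectDiagonal) : Aᵀ.IsRectDiagonal :=
  fun i j hij => hA j i (Ne.symm hij)

theorem IsRectDiagonal.sub [SubtractionMonoid R] {A B : Matrix (Fin p) (Fin q) R}
    (hA : A.IsRectDiagonal) (hB : B.IsRectDiagonal) : (A - B).IsRectDiagonal :=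
  fun i j hij => by rw [sub_apply, hA i j hij, hB i j hij, sub_zero]

noncomputable def offDiagCLM (p q : ℕ) :
    Matrix (Fin p) (Fin q) ℝ →L[ℝ] Matrix (Fin p) (Fin q) ℝ :=
  LinearMap.toContinuousLinearMap
    { toFun := fun A => of fun i j => if (i : ℕ) = (j : ℕ) then 0 else A i j
      map_add' := fun A B => by ext i j; simp only [of_apply, add_apply]; split_ifs <;> simp
      map_smul' := fun c A => by ext i j; simp only [of_apply, smul_apply]; split_ifs <;> simp }

theorem offDiagCLM_apply (A : Matrix (Fin p) (Fin q) ℝ) (i : Fin p) (j : Fin q) :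
    offDiagCLM p q A i j = if (i : ℕ) = (j : ℕ) then 0 else A i j := rfl

theorem offDiagCLM_eq_zero_iff {A : Matrix (Fin p) (Fin q) ℝ} :
    offDiagCLM p q A = 0 ↔ A.IsRectDiagonal := by
  refine ⟨fun h i j hij => ?_, fun h => ?_⟩
  · simpa [offDiagCLM_apply, hij] using congr_fun₂ h i j
  · ext i j
    rw [offDiagCLM_apply]
    split_ifs with hij
    exacts [rfl, h i j hij]

noncomputable def offDiagProj (n m r : ℕ) :
    Matrix (Fin n) (Fin r) ℝ × Matrix (Fin r) (Fin m) ℝ →L[ℝ]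
      Matrix (Fin n) (Fin r) ℝ × Matrix (Fin r) (Fin m) ℝ :=
  (offDiagCLM n r).prodMap (offDiagCLM r m)

theorem offDiagProj_eq_zero_iff {n m r : ℕ}
    {v : Matrix (Fin n) (Fin r) ℝ × Matrix (Fin r) (Fin m) ℝ} :
    offDiagProj n m r v = 0 ↔ v.1.IsRectDiagonal ∧ v.2.IsRectDiagonal := by
  rw [← offDiagCLM_eq_zero_iff, ← offDiagCLM_eq_zero_iff, ← Prod.mk_eq_zero]
  rfl

theorem isIdempotentElem_offDiagProj (n m r : ℕ) : IsIdempotentElem (offDiagProj n m r) := by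
  refine ContinuousLinearMap.ext fun v => Prod.ext ?_ ?_ <;>
  · ext i j
    change offDiagCLM _ _ (offDiagCLM _ _ _) i j = offDiagCLM _ _ _ i j
    simp only [offDiagCLM_apply]
    split_ifs <;> rfl

end Matrix

def loraField {n m r : ℕ} (S₀ : Matrix (Fin n) (Fin m) ℝ)
    (v : Matrix (Fin n) (Fin r) ℝ × Matrix (Fin r) (Fin m) ℝ) :
    Matrix (Fin n) (Fin r) ℝ × Matrix (Fin r) (Fin m) ℝ :=
  ((S₀ - v.1 * v.2) * v.2ᵀ, v.1ᵀ * (S₀ - v.1 * v.2))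

theorem contDiff_loraField {n m r : ℕ} (S₀ : Matrix (Fin n) (Fin m) ℝ) :
    ContDiff ℝ 1 (loraField (r := r) S₀) := by
  refine ContDiff.prodMk (contDiff_pi.2 fun i => contDiff_pi.2 fun j => ?_)
    (contDiff_pi.2 fun i => contDiff_pi.2 fun j => ?_) <;>
  · simp only [mul_apply, Matrix.sub_apply, transpose_apply]
    fun_prop

theorem loraField_isRectDiagonal {n m r : ℕ} {S₀ : Matrix (Fin n) (Fin m) ℝ}
    (hS : S₀.IsRectDiagonal) {v : Matrix (Fin n) (Fin r) ℝ × Matrix (Fin r) (Fin m) ℝ}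
    (hv : v.1.IsRectDiagonal ∧ v.2.IsRectDiagonal) :
    (loraField S₀ v).1.IsRectDiagonal ∧ (loraField S₀ v).2.IsRectDiagonal :=
  have hR := hS.sub (hv.1.mul hv.2)
  ⟨hR.mul hv.2.transpose, hv.1.transpose.mul hR⟩

/-- For `Ỹ' = (S₀ − ỸX̃)X̃ᵀ`, `X̃' = Ỹᵀ(S₀ − ỸX̃)` with `S₀` diagonal, if
`Ỹ(0)` and `X̃(0)` are supported only on diagonal positions `(i,i)`, then
`Ỹ(t)` and `X̃(t)` retain this sparsity pattern for all `t ≥ 0`, so the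
dynamics decouple into independent scalar systems. -/
theorem lora_flow_diagonal_invariant {n m r : ℕ}
    (S₀ : Matrix (Fin n) (Fin m) ℝ)
    (hS : ∀ (i : Fin n) (j : Fin m), (i : ℕ) ≠ (j : ℕ) → S₀ i j = 0)
    (Y : ℝ → Matrix (Fin n) (Fin r) ℝ) (X : ℝ → Matrix (Fin r) (Fin m) ℝ)
    (hY : ∀ t : ℝ, HasDerivAt Y ((S₀ - Y t * X t) * (X t)ᵀ) t)
    (hX : ∀ t : ℝ, HasDerivAt X ((Y t)ᵀ * (S₀ - Y t * X t)) t)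
    (hY0 : ∀ (i : Fin n) (j : Fin r), (i : ℕ) ≠ (j : ℕ) → Y 0 i j = 0)
    (hX0 : ∀ (i : Fin r) (j : Fin m), (i : ℕ) ≠ (j : ℕ) → X 0 i j = 0) :
    ∀ t : ℝ, 0 ≤ t →
      (∀ (i : Fin n) (j : Fin r), (i : ℕ) ≠ (j : ℕ) → Y t i j = 0) ∧
      (∀ (i : Fin r) (j : Fin m), (i : ℕ) ≠ (j : ℕ) → X t i j = 0) := by
  intro T hT
  have hflow : ∀ t, HasDerivAt (fun s => (Y s, X s)) (loraField S₀ (Y t, X t)) t :=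
    fun t => (hY t).prodMk (hX t)
  have htangent : ∀ v, offDiagProj n m r v = 0 → offDiagProj n m r (loraField S₀ v) = 0 :=
    fun v hv => offDiagProj_eq_zero_iff.2 <|
      loraField_isRectDiagonal hS (offDiagProj_eq_zero_iff.1 hv)
  exact offDiagProj_eq_zero_iff.1 <|
    ContinuousLinearMap.apply_eq_zero_of_hasDerivWithinAt_of_mapsTo_ker
      (isIdempotentElem_offDiagProj n m r) (contDiff_loraField S₀).locallyLipschitz htangent
      (continuous_iff_continuousAt.2 fun t => (hflow t).continuousAt).continuousOn
      (fun t _ => (hflow t).hasDerivWithinAt) (offDiagProj_eq_zero_iff.2 ⟨hY0, hX0⟩)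
      T ⟨hT, le_rfl⟩
end
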